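/- arXiv:2108.00643 — 4 statements merged into one kernel-verified Lean document; each statement's English description precedes it below -/
import Mathlib

section
/- For positive definite matrices A and B, the determinant of the t-spectral geometric mean equals (det A)^(1-t) (det B)^t, i.e., det(A ♮_t B) = (det A)^(1-t) (det B)^t. -/
open Matrix
open scoped ComplexOrder

noncomputable def mpow {m : Type*} [Fintype m] [DecidableEq m]
    (A : Matrix m m ℂ) (t : ℝ) : Matrix m m ℂ :=
  if h : A.IsHermitian then
    (h.eigenvectorUnitary : Matrix m m ℂ) *
      Matrix.diagonal (fun i => ((h.eigenvalues i ^ t : ℝ) : ℂ)) *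
      star (h.eigenvectorUnitary : Matrix m m ℂ)
  else A

/-- t-metric geometric mean `A ♯ₜ B`. -/
noncomputable def msharp {m : Type*} [Fintype m] [DecidableEq m]
    (A B : Matrix m m ℂ) (t : ℝ) : Matrix m m ℂ :=
  mpow A (1/2) * mpow (mpow A (-(1/2)) * B * mpow A (-(1/2))) t * mpow A (1/2)

/-- t-spectral geometric mean `A ♮ₜ B`. -/
noncomputable def mnat {m : Type*} [Fintype m] [DecidableEq m]
    (A B : Matrix m m ℂ) (t : ℝ) : Matrix m m ℂ :=
  mpow (msharp A⁻¹ B (1/2)) t * A * mpow (msharp A⁻¹ B (1/2)) t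

/-- Eigenvalues in non-increasing order (junk value `0` if not Hermitian). -/
noncomputable def eigsDesc {n : ℕ} (A : Matrix (Fin n) (Fin n) ℂ) : Fin n → ℝ :=
  if h : A.IsHermitian then (fun i => h.eigenvalues (Tuple.sort h.eigenvalues i.rev)) else 0

/-- `x` is log-majorized by `y` (both listed in non-increasing order). -/
def LogMaj {n : ℕ} (x y : Fin n → ℝ) : Prop :=
  (∀ k : ℕ, ∏ i ∈ Finset.univ.filter (fun i : Fin n => (i : ℕ) < k), x i ≤
      ∏ i ∈ Finset.univ.filter (fun i : Fin n => (i : ℕ) < k), y i) ∧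
    ∏ i, x i = ∏ i, y i

/-- k-th compound matrix. -/
noncomputable def compound {n : ℕ} (k : ℕ) (A : Matrix (Fin n) (Fin n) ℂ) :
    Matrix {s : Finset (Fin n) // s.card = k} {s : Finset (Fin n) // s.card = k} ℂ :=
  fun s t => (A.submatrix (fun i => (s.1.orderIsoOfFin s.2 i : Fin n))
    (fun i => (t.1.orderIsoOfFin t.2 i : Fin n))).det


/-! Since `mpow M t` is unitarily similar to the diagonal matrix of the `t`-th powers of the
eigenvalues of `M`, its determinant is `(det M) ^ t`. The determinant is multiplicative, so
`det (A ♮ₜ B)` is the same expression in the positive scalars `det A`, `det B` as `A ♮ₜ B` is in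
`A`, `B`, and for positive scalars both `a ♯ₜ b` and `a ♮ₜ b` equal `a ^ (1 - t) * b ^ t`. -/

section

variable {m : Type*} [Fintype m] [DecidableEq m] {M N : Matrix m m ℂ}

namespace Matrix.PosDef

lemma re_det_pos (hM : M.PosDef) : 0 < M.det.re :=
  (Complex.pos_iff.1 hM.det_pos).1

lemma ofReal_re_det (hM : M.PosDef) : (M.det.re : ℂ) = M.det :=
  Complex.ext rfl (Complex.pos_iff.1 hM.det_pos).2

lemma re_det_inv (hM : M.PosDef) : M⁻¹.det.re = M.det.re⁻¹ := by
  rw [det_nonsing_inv, Ring.inverse_eq_inv', ← hM.ofReal_re_det, ← Complex.ofReal_inv,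
    Complex.ofReal_re, Complex.ofReal_re]

lemma mul_mul_same (hM : M.PosDef) (hN : N.PosDef) : (N * M * N).PosDef := by
  simpa only [star_eq_conjTranspose, hN.isHermitian.eq] using
    hN.isUnit.posDef_star_right_conjugate_iff.2 hM

end Matrix.PosDef

lemma posDef_mpow (hM : M.PosDef) (t : ℝ) : (mpow M t).PosDef := by
  rw [mpow, dif_pos hM.isHermitian]
  refine Unitary.isUnit_coe.posDef_star_right_conjugate_iff.2 (PosDef.diagonal fun i => ?_)
  exact Complex.zero_lt_real.2 (Real.rpow_pos_of_pos (hM.eigenvalues_pos i) t)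

lemma det_mpow (hM : M.PosDef) (t : ℝ) : (mpow M t).det = ((M.det.re ^ t : ℝ) : ℂ) := by
  rw [mpow, dif_pos hM.isHermitian, det_mul_right_comm,
    Unitary.mul_star_self_of_mem (SetLike.coe_mem _), one_mul, det_diagonal,
    hM.isHermitian.det_eq_prod_eigenvalues]
  simp only [Complex.coe_algebraMap, ← Complex.ofReal_prod, Complex.ofReal_re,
    Real.finsetProd_rpow _ _ fun i _ => (hM.eigenvalues_pos i).le]

lemma posDef_msharp (hM : M.PosDef) (hN : N.PosDef) (t : ℝ) : (msharp M N t).PosDef :=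
  (posDef_mpow (hN.mul_mul_same (posDef_mpow hM _)) t).mul_mul_same (posDef_mpow hM _)

lemma det_msharp (hM : M.PosDef) (hN : N.PosDef) (t : ℝ) :
    (msharp M N t).det = ((M.det.re ^ (1 - t) * N.det.re ^ t : ℝ) : ℂ) := by
  rw [msharp, det_mul, det_mul, det_mpow hM, det_mpow (hN.mul_mul_same (posDef_mpow hM _)),
    det_mul, det_mul, det_mpow hM, ← hN.ofReal_re_det]
  simp only [← Complex.ofReal_mul, Complex.ofReal_re]
  congr 1
  obtain ⟨x, hx⟩ : ∃ x, Real.exp x = M.det.re := ⟨_, Real.exp_log hM.re_det_pos⟩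
  obtain ⟨y, hy⟩ : ∃ y, Real.exp y = N.det.re := ⟨_, Real.exp_log hN.re_det_pos⟩
  simp only [← hx, ← hy, ← Real.exp_mul, ← Real.exp_add]
  congr 1
  ring

end

theorem det_mnat_general {n : ℕ} (A B : Matrix (Fin n) (Fin n) ℂ)
    (hA : A.PosDef) (hB : B.PosDef) (t : ℝ) :
    (mnat A B t).det = ((A.det.re ^ (1 - t) * B.det.re ^ t : ℝ) : ℂ) := by
  rw [mnat, det_mul, det_mul, det_mpow (posDef_msharp hA.inv hB _) t, det_msharp hA.inv hB,
    hA.re_det_inv, ← hA.ofReal_re_det]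
  simp only [← Complex.ofReal_mul, Complex.ofReal_re]
  congr 1
  obtain ⟨x, hx⟩ : ∃ x, Real.exp x = A.det.re := ⟨_, Real.exp_log hA.re_det_pos⟩
  obtain ⟨y, hy⟩ : ∃ y, Real.exp y = B.det.re := ⟨_, Real.exp_log hB.re_det_pos⟩
  simp only [← hx, ← hy, ← Real.exp_neg, ← Real.exp_mul, ← Real.exp_add]
  congr 1
  ring

theorem det_mnat {n : ℕ} (A B : Matrix (Fin n) (Fin n) ℂ)
    (hA : A.PosDef) (hB : B.PosDef) (t : ℝ) (ht : t ∈ Set.Icc (0:ℝ) 1) :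
    (mnat A B t).det = ((A.det.re ^ (1 - t) * B.det.re ^ t : ℝ) : ℂ) :=
  det_mnat_general A B hA hB t
end

section
/- For positive definite matrices A, B and t ∈ [0,1], the inverse of the t-spectral mean is the t-spectral mean of the inverses: (A ♮_t B)^{-1} = A^{-1} ♮_t B^{-1}. -/
open Matrix
open scoped ComplexOrder

/-!
For positive definite `X`, inversion commutes with real powers: `(X ^ s)⁻¹ = X ^ (-s) = X⁻¹ ^ s`.
Since inversion also reverses products, inverting the three factors of `A ♯ₜ B` gives
`(A ♯ₜ B)⁻¹ = A⁻¹ ♯ₜ B⁻¹`. With `M = A⁻¹ ♯ B` this says `(A⁻¹)⁻¹ ♯ B⁻¹ = M⁻¹`, so both sides of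
the claim equal `M ^ (-t) * A⁻¹ * M ^ (-t)`.
-/

namespace Matrix

variable {m : Type*} [Fintype m] [DecidableEq m]

lemma PosDef.mul_mul_of_isHermitian {B C : Matrix m m ℂ} (hB : B.PosDef) (hC : C.IsHermitian)
    (hCu : IsUnit C) : (C * B * C).PosDef := by
  have h := (IsUnit.posDef_star_right_conjugate_iff hCu).2 hB
  rwa [star_eq_conjTranspose, hC.eq] at h

lemma IsHermitian.mpow_eq_cfc {A : Matrix m m ℂ} (hA : A.IsHermitian) (t : ℝ) :
    mpow A t = cfc (fun x : ℝ => x ^ t) A := by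
  rw [hA.cfc_eq, IsHermitian.cfc, mpow, dif_pos hA]
  rfl

lemma PosDef.mpow {A : Matrix m m ℂ} (hA : A.PosDef) (t : ℝ) : (mpow A t).PosDef := by
  rw [_root_.mpow, dif_pos hA.isHermitian,
    Unitary.isUnit_coe.posDef_star_right_conjugate_iff, posDef_diagonal_iff]
  exact fun i => mod_cast Real.rpow_pos_of_pos (hA.eigenvalues_pos i) t

lemma mpow_add {A : Matrix m m ℂ} (hA : A.PosDef) (s t : ℝ) :
    mpow A (s + t) = mpow A s * mpow A t := by
  have hpos : ∀ x ∈ spectrum ℝ A, 0 < x := by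
    rw [hA.isHermitian.spectrum_real_eq_range_eigenvalues]
    rintro x ⟨i, rfl⟩
    exact hA.eigenvalues_pos i
  have hfin := A.finite_real_spectrum
  rw [hA.isHermitian.mpow_eq_cfc, hA.isHermitian.mpow_eq_cfc, hA.isHermitian.mpow_eq_cfc,
    ← cfc_mul _ _ A (hfin.continuousOn _) (hfin.continuousOn _)]
  exact cfc_congr fun x hx => Real.rpow_add (hpos x hx) s t

lemma mpow_zero {A : Matrix m m ℂ} (hA : A.IsHermitian) : mpow A 0 = 1 := by
  rw [hA.mpow_eq_cfc]
  simp only [Real.rpow_zero]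
  exact cfc_const_one ℝ A

lemma mpow_neg {A : Matrix m m ℂ} (hA : A.PosDef) (t : ℝ) : mpow A (-t) = (mpow A t)⁻¹ :=
  (inv_eq_left_inv (by rw [← mpow_add hA, neg_add_cancel, mpow_zero hA.isHermitian])).symm

lemma inv_mpow {A : Matrix m m ℂ} (hA : A.PosDef) (t : ℝ) : mpow A⁻¹ t = (mpow A t)⁻¹ := by
  have hfin := A.finite_real_spectrum
  have hcomp := cfc_comp_inv (fun x : ℝ => x ^ t) hA.isUnit.unit ((hfin.image _).continuousOn _)
    (by simpa using hA.isHermitian.isSelfAdjoint)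
  rw [coe_units_inv, IsUnit.unit_spec] at hcomp
  calc mpow A⁻¹ t = cfc (fun x : ℝ => x⁻¹ ^ t) A := by rw [hA.inv.isHermitian.mpow_eq_cfc, hcomp]
    _ = mpow A (-t) := by
      rw [hA.isHermitian.mpow_eq_cfc]
      exact cfc_congr fun x _ => (Real.rpow_neg_eq_inv_rpow x t).symm
    _ = (mpow A t)⁻¹ := mpow_neg hA t

lemma PosDef.msharp {A B : Matrix m m ℂ} (hA : A.PosDef) (hB : B.PosDef) (t : ℝ) :
    (msharp A B t).PosDef :=
  ((hB.mul_mul_of_isHermitian (hA.mpow _).isHermitian (hA.mpow _).isUnit).mpow t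
    ).mul_mul_of_isHermitian (hA.mpow _).isHermitian (hA.mpow _).isUnit

lemma msharp_inv {A B : Matrix m m ℂ} (hA : A.PosDef) (hB : B.PosDef) (t : ℝ) :
    (msharp A B t)⁻¹ = msharp A⁻¹ B⁻¹ t := by
  have hC := hB.mul_mul_of_isHermitian (hA.mpow (-(1/2))).isHermitian (hA.mpow _).isUnit
  rw [_root_.msharp, _root_.msharp, mul_inv_rev, mul_inv_rev, ← inv_mpow hA, ← inv_mpow hC,
    mul_inv_rev, mul_inv_rev, ← inv_mpow hA]
  simp only [Matrix.mul_assoc]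

end Matrix

theorem mnat_inv_general {n : ℕ} (A B : Matrix (Fin n) (Fin n) ℂ)
    (hA : A.PosDef) (hB : B.PosDef) (t : ℝ) :
    (mnat A B t)⁻¹ = mnat A⁻¹ B⁻¹ t := by
  have hM := Matrix.msharp_inv hA.inv hB (1/2)
  rw [mnat, mnat, ← hM, Matrix.inv_mpow (hA.inv.msharp hB _), Matrix.mul_inv_rev,
    Matrix.mul_inv_rev, Matrix.mul_assoc]

theorem mnat_inv {n : ℕ} (A B : Matrix (Fin n) (Fin n) ℂ)
    (hA : A.PosDef) (hB : B.PosDef) (t : ℝ) (ht : t ∈ Set.Icc (0:ℝ) 1) :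
    (mnat A B t)⁻¹ = mnat A⁻¹ B⁻¹ t :=
  mnat_inv_general A B hA hB t
end

section
/- For positive definite matrices A, B and t ∈ [0,1], the t-spectral mean satisfies the symmetry A ♮_t B = B ♮_{1-t} A. -/
open Matrix
open scoped ComplexOrder

/-!
`M = A⁻¹ ♯ B` is the unique positive solution of the Riccati equation `M A M = B`. Since then
`M⁻¹ B M⁻¹ = A`, uniqueness gives `B⁻¹ ♯ A = M⁻¹`, and therefore
`B ♮_{1-t} A = M^(t-1) B M^(t-1) = M^(t-1) (M A M) M^(t-1) = M^t A M^t = A ♮_t B`.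
Only the real-power calculus of strictly positive elements enters, so the argument is run in
the continuous functional calculus, where `mpow` agrees with `CFC.rpow` on positive matrices.
-/

section RiccatiEquation

open CFC

variable {A : Type*} [PartialOrder A] [Ring A] [StarRing A] [TopologicalSpace A]
  [StarOrderedRing A] [Algebra ℝ A] [ContinuousFunctionalCalculus ℝ A IsSelfAdjoint]
  [NonnegSpectrumClass ℝ A] [IsSemitopologicalRing A] [T2Space A]

lemma exists_units_rpow_half {a : A} (ha : IsStrictlyPositive a) :
    ∃ u : Aˣ, (u : A) * u = a ∧ (u : A) = a ^ (1 / 2 : ℝ) ∧ (↑u⁻¹ : A) = a ^ (-(1 / 2) : ℝ) :=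
  ⟨⟨_, _, rpow_mul_rpow_neg _ ha, rpow_neg_mul_rpow _ ha⟩,
    by rw [Units.val_mk, ← sqrt_eq_rpow, sqrt_mul_sqrt_self a ha.nonneg], rfl, rfl⟩

/-- `riccatiSolution a b` is `a⁻¹ ♯ b` in the notation of the paper. -/
noncomputable def riccatiSolution (a b : A) : A :=
  a ^ (-(1 / 2) : ℝ) * sqrt (a ^ (1 / 2 : ℝ) * b * a ^ (1 / 2 : ℝ)) * a ^ (-(1 / 2) : ℝ)

lemma riccatiSolution_mul_mul_riccatiSolution {a b : A} (ha : IsStrictlyPositive a)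
    (hb : 0 ≤ b) : riccatiSolution a b * a * riccatiSolution a b = b := by
  obtain ⟨u, hua, hu, hu'⟩ := exists_units_rpow_half ha
  have hss : sqrt (u * b * u) * sqrt (u * b * u) = u * b * u :=
    sqrt_mul_sqrt_self _ (conjugate_nonneg_of_nonneg hb (hu ▸ rpow_nonneg))
  rw [riccatiSolution, ← hu, ← hu', ← hua]
  calc ↑u⁻¹ * sqrt (u * b * u) * ↑u⁻¹ * (u * u) * (↑u⁻¹ * sqrt (u * b * u) * ↑u⁻¹)
      = ↑u⁻¹ * (sqrt (u * b * u) * sqrt (u * b * u)) * ↑u⁻¹ := by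
        simp only [mul_assoc, Units.inv_mul_cancel_left, Units.mul_inv_cancel_left]
    _ = b := by
        rw [hss]
        simp only [mul_assoc, Units.inv_mul_cancel_left, Units.mul_inv, mul_one]

lemma riccatiSolution_eq_of_mul_mul_eq {a b x : A} (ha : IsStrictlyPositive a) (hx : 0 ≤ x)
    (hxax : x * a * x = b) : riccatiSolution a b = x := by
  obtain ⟨u, hua, hu, hu'⟩ := exists_units_rpow_half ha
  have hsqrt : sqrt (u * b * u) = u * x * u := by
    refine sqrt_unique ?_ (conjugate_nonneg_of_nonneg hx (hu ▸ rpow_nonneg))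
    simp only [← hxax, ← hua, mul_assoc]
  rw [riccatiSolution, ← hu, ← hu', hsqrt]
  simp only [mul_assoc, Units.inv_mul_cancel_left, Units.mul_inv, mul_one]

lemma _root_.IsStrictlyPositive.riccatiSolution {a b : A} (ha : IsStrictlyPositive a)
    (hb : IsStrictlyPositive b) : IsStrictlyPositive (riccatiSolution a b) := by
  have hg := IsStrictlyPositive.rpow a (-(1 / 2)) ha
  have hh := IsStrictlyPositive.rpow a (1 / 2) ha
  exact .conjugate_of_isUnit_of_isSelfAdjoint _ _ hg.isUnit hg.isSelfAdjoint
    (.sqrt _ (.conjugate_of_isUnit_of_isSelfAdjoint _ _ hh.isUnit hh.isSelfAdjoint hb))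

lemma riccatiSolution_swap {a b : A} (ha : IsStrictlyPositive a) (hb : IsStrictlyPositive b) :
    riccatiSolution b a = Ring.inverse (riccatiSolution a b) := by
  have hx := ha.riccatiSolution hb
  have hxax := riccatiSolution_mul_mul_riccatiSolution ha hb.nonneg
  set x := riccatiSolution a b
  refine riccatiSolution_eq_of_mul_mul_eq hb hx.ringInverse.nonneg ?_
  calc Ring.inverse x * b * Ring.inverse x
      = (Ring.inverse x * x) * a * (x * Ring.inverse x) := by simp only [← hxax, mul_assoc]
    _ = a := by rw [Ring.inverse_mul_cancel _ hx.isUnit, Ring.mul_inverse_cancel _ hx.isUnit,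
          one_mul, mul_one]

/-- `spectralMean a b t` is `a ♮_t b` in the notation of the paper. -/
noncomputable def spectralMean (a b : A) (t : ℝ) : A :=
  riccatiSolution a b ^ t * a * riccatiSolution a b ^ t

lemma spectralMean_symm {a b : A} (ha : IsStrictlyPositive a) (hb : IsStrictlyPositive b)
    (t : ℝ) : spectralMean a b t = spectralMean b a (1 - t) := by
  have hx := ha.riccatiSolution hb
  have hxax := riccatiSolution_mul_mul_riccatiSolution ha hb.nonneg
  set x := riccatiSolution a b
  have hinv : Ring.inverse x ^ (1 - t) = x ^ (t - 1) := by
    rw [CFC.inverse_eq_rpow_neg_one hx, rpow_rpow _ _ _ (by norm_num) hx,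
      show (-1 : ℝ) * (1 - t) = t - 1 by ring]
  have hleft : x ^ (t - 1) * x = x ^ t :=
    calc x ^ (t - 1) * x = x ^ (t - 1) * x ^ (1 : ℝ) := by rw [rpow_one x hx.nonneg]
      _ = x ^ t := by rw [← rpow_add hx.isUnit, sub_add_cancel]
  have hright : x * x ^ (t - 1) = x ^ t :=
    calc x * x ^ (t - 1) = x ^ (1 : ℝ) * x ^ (t - 1) := by rw [rpow_one x hx.nonneg]
      _ = x ^ t := by rw [← rpow_add hx.isUnit, add_sub_cancel]
  calc spectralMean a b t = (x ^ (t - 1) * x) * a * (x * x ^ (t - 1)) := by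
        rw [hleft, hright, spectralMean]
    _ = spectralMean b a (1 - t) := by
        rw [spectralMean, riccatiSolution_swap ha hb, hinv, ← hxax]
        simp only [mul_assoc]

end RiccatiEquation

section Matrix

open scoped MatrixOrder

variable {m : Type*} [Fintype m] [DecidableEq m]

lemma mpow_eq_rpow {A : Matrix m m ℂ} (hA : A.PosSemidef) (t : ℝ) : mpow A t = A ^ t := by
  rw [CFC.rpow_eq_cfc_real hA.nonneg, hA.1.cfc_eq, Matrix.IsHermitian.cfc, mpow, dif_pos hA.1]
  rfl

lemma inv_rpow_of_posDef {A : Matrix m m ℂ} (hA : A.PosDef) (t : ℝ) : A⁻¹ ^ t = A ^ (-t) := by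
  rw [nonsing_inv_eq_ringInverse, CFC.inverse_eq_rpow_neg_one hA.isStrictlyPositive,
    CFC.rpow_rpow _ _ _ (by norm_num) hA.isStrictlyPositive, neg_one_mul]

lemma msharp_inv_half_eq_riccatiSolution {A B : Matrix m m ℂ} (hA : A.PosDef)
    (hB : B.PosSemidef) : msharp A⁻¹ B (1 / 2) = riccatiSolution A B := by
  have hconj : (A ^ (1 / 2 : ℝ) * B * A ^ (1 / 2 : ℝ)).PosSemidef :=
    nonneg_iff_posSemidef.mp (conjugate_nonneg_of_nonneg hB.nonneg CFC.rpow_nonneg)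
  rw [msharp, mpow_eq_rpow hA.inv.posSemidef, mpow_eq_rpow hA.inv.posSemidef,
    inv_rpow_of_posDef hA, inv_rpow_of_posDef hA, neg_neg, mpow_eq_rpow hconj,
    ← CFC.sqrt_eq_rpow]
  rfl

lemma mnat_eq_spectralMean {A B : Matrix m m ℂ} (hA : A.PosDef) (hB : B.PosDef) (t : ℝ) :
    mnat A B t = spectralMean A B t := by
  have hM := hA.isStrictlyPositive.riccatiSolution hB.isStrictlyPositive
  rw [mnat, msharp_inv_half_eq_riccatiSolution hA hB.posSemidef,
    mpow_eq_rpow (nonneg_iff_posSemidef.mp hM.nonneg)]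
  rfl

end Matrix

theorem mnat_symm_general {n : ℕ} (A B : Matrix (Fin n) (Fin n) ℂ)
    (hA : A.PosDef) (hB : B.PosDef) (t : ℝ) :
    mnat A B t = mnat B A (1 - t) := by
  open scoped MatrixOrder in
  rw [mnat_eq_spectralMean hA hB, mnat_eq_spectralMean hB hA,
    spectralMean_symm hA.isStrictlyPositive hB.isStrictlyPositive]

theorem mnat_symm {n : ℕ} (A B : Matrix (Fin n) (Fin n) ℂ)
    (hA : A.PosDef) (hB : B.PosDef) (t : ℝ) (ht : t ∈ Set.Icc (0:ℝ) 1) :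
    mnat A B t = mnat B A (1 - t) :=
  mnat_symm_general A B hA hB t
end

section
/- For positive definite matrices A, B and parameters r, s, t ∈ [0,1], the interpolation identity (A ♮_r B) ♮_t (A ♮_s B) = A ♮_{(1-t)r + ts} B holds. -/
open Matrix
open scoped ComplexOrder

/-!
Let `C = A⁻¹ ♯ B`, so that `A ♮_u B = C^u A C^u`. The mean `P⁻¹ ♯ Q` is the unique positive
definite solution `X` of the Riccati equation `X P X = Q` (compare the squares of `R X R`,
`R = P^(1/2)`), hence `P ♮_t Q = X^t P X^t` whenever `X P X = Q`. Applied to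
`C^(s-r) (A ♮_r B) C^(s-r) = A ♮_s B` this gives
`(A ♮_r B) ♮_t (A ♮_s B) = C^((s-r)t + r) A C^((s-r)t + r)`, and `(s-r)t + r = (1-t)r + ts`.
-/

namespace Matrix

variable {m : Type*} [Fintype m] [DecidableEq m]

lemma PosDef.mul_mul_same_s6 {A Z : Matrix m m ℂ} (hA : A.PosDef) (hZ : Z.PosDef) :
    (Z * A * Z).PosDef := by
  simpa only [star_eq_conjTranspose, hZ.1.eq] using
    (IsUnit.posDef_star_left_conjugate_iff hZ.isUnit).mpr hA

section mpow

variable {A : Matrix m m ℂ} (hA : A.PosDef)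
include hA

lemma PosDef.pos_of_mem_spectrum {x : ℝ} (hx : x ∈ spectrum ℝ A) : 0 < x := by
  obtain ⟨i, rfl⟩ := hA.1.spectrum_real_eq_range_eigenvalues ▸ hx
  exact hA.eigenvalues_pos i

lemma mpow_add_s6 (a b : ℝ) : mpow A a * mpow A b = mpow A (a + b) := by
  rw [hA.1.mpow_eq_cfc, hA.1.mpow_eq_cfc, hA.1.mpow_eq_cfc,
    ← cfc_mul _ _ A (A.finite_real_spectrum.continuousOn _)
    (A.finite_real_spectrum.continuousOn _)]
  exact cfc_congr fun x hx => (Real.rpow_add (hA.pos_of_mem_spectrum hx) a b).symm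

lemma mpow_zero_s6 : mpow A 0 = 1 := by
  have : IsSelfAdjoint A := hA.1
  rw [hA.1.mpow_eq_cfc, cfc_congr (g := fun _ : ℝ => (1 : ℝ)) fun x _ => Real.rpow_zero x]
  exact cfc_const_one ℝ A

lemma mpow_one : mpow A 1 = A := by
  have : IsSelfAdjoint A := hA.1
  rw [hA.1.mpow_eq_cfc, cfc_congr (g := fun x : ℝ => x) fun x _ => Real.rpow_one x]
  exact cfc_id' ℝ A

lemma mpow_mpow (a b : ℝ) : mpow (mpow A a) b = mpow A (a * b) := by
  have : IsSelfAdjoint A := hA.1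
  rw [(hA.mpow a).1.mpow_eq_cfc, hA.1.mpow_eq_cfc, hA.1.mpow_eq_cfc,
    ← cfc_comp' _ _ A ((Set.toFinite _).continuousOn _)
      (A.finite_real_spectrum.continuousOn _)]
  exact cfc_congr fun x hx => (Real.rpow_mul (hA.pos_of_mem_spectrum hx).le a b).symm

lemma mpow_mul_mpow_of_add_eq_zero {a b : ℝ} (h : a + b = 0) : mpow A a * mpow A b = 1 := by
  rw [mpow_add_s6 hA, h, mpow_zero_s6 hA]

lemma mpow_half_mul_mpow_half : mpow A (1 / 2) * mpow A (1 / 2) = A := by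
  rw [mpow_add_s6 hA, add_halves, mpow_one hA]

lemma mpow_neg_one : mpow A (-1) = A⁻¹ := by
  refine (inv_eq_right_inv ?_).symm
  calc A * mpow A (-1) = mpow A 1 * mpow A (-1) := by rw [mpow_one hA]
    _ = 1 := mpow_mul_mpow_of_add_eq_zero hA (add_neg_cancel 1)

lemma mpow_mul_mpow_mul_mul (B : Matrix m m ℂ) (a b : ℝ) :
    mpow A a * (mpow A b * B * mpow A b) * mpow A a = mpow A (a + b) * B * mpow A (a + b) := by
  simp only [mul_assoc]
  rw [← mul_assoc (mpow A a), mpow_add_s6 hA, mpow_add_s6 hA b a, add_comm b a]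

end mpow

lemma eq_of_mul_mul_eq_mul_mul {A X Y : Matrix m m ℂ} (hA : A.PosDef) (hX : X.PosDef)
    (hY : Y.PosDef) (h : X * A * X = Y * A * Y) : X = Y := by
  set R := mpow A (1 / 2)
  have hR : R.PosDef := hA.mpow _
  have hRR : R * R = A := mpow_half_mul_mpow_half hA
  have hsq (Z : Matrix m m ℂ) : (R * Z * R) ^ 2 = R * (Z * A * Z) * R := by
    rw [sq, ← hRR]
    simp only [mul_assoc]
  have hRXR : R * X * R = R * Y * R := by
    open scoped Matrix.Norms.L2Operator MatrixOrder in
    exact (CFC.sq_eq_sq_iff _ _ (hX.mul_mul_same_s6 hR).posSemidef.nonneg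
      (hY.mul_mul_same_s6 hR).posSemidef.nonneg).mp (by rw [hsq, hsq, h])
  exact hR.isUnit.mul_left_cancel (hR.isUnit.mul_right_cancel hRXR)

lemma msharp_half_mul_inv_mul {A B : Matrix m m ℂ} (hA : A.PosDef) (hB : B.PosDef) :
    msharp A B (1 / 2) * A⁻¹ * msharp A B (1 / 2) = B := by
  set R := mpow A (1 / 2)
  set S := mpow A (-(1 / 2))
  set Y := mpow (S * B * S) (1 / 2)
  have hRAR : R * A⁻¹ * R = 1 := by
    rw [← mpow_neg_one hA, mpow_add_s6 hA, mpow_mul_mpow_of_add_eq_zero hA (by norm_num)]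
  have hYY : Y * Y = S * B * S :=
    mpow_half_mul_mpow_half (hB.mul_mul_same_s6 (hA.mpow _))
  calc R * Y * R * A⁻¹ * (R * Y * R)
      = R * Y * (R * A⁻¹ * R) * Y * R := by simp only [mul_assoc]
    _ = (R * S) * B * (S * R) := by
      rw [hRAR, mul_one, mul_assoc R Y Y, hYY]
      simp only [mul_assoc]
    _ = B := by
      rw [mpow_mul_mpow_of_add_eq_zero hA (add_neg_cancel _),
        mpow_mul_mpow_of_add_eq_zero hA (neg_add_cancel _), one_mul, mul_one]

lemma msharp_inv_eq_of_mul_mul_eq {P Q X : Matrix m m ℂ} (hP : P.PosDef) (hX : X.PosDef)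
    (h : X * P * X = Q) : msharp P⁻¹ Q (1 / 2) = X := by
  have hQ : Q.PosDef := h ▸ hP.mul_mul_same_s6 hX
  have hsharp := msharp_half_mul_inv_mul hP.inv hQ
  rw [nonsing_inv_nonsing_inv P ((isUnit_iff_isUnit_det P).mp hP.isUnit)] at hsharp
  exact eq_of_mul_mul_eq_mul_mul hP (hP.inv.msharp hQ _) hX (hsharp.trans h.symm)

lemma mnat_eq_of_mul_mul_eq {P Q X : Matrix m m ℂ} (hP : P.PosDef) (hX : X.PosDef)
    (h : X * P * X = Q) (t : ℝ) : mnat P Q t = mpow X t * P * mpow X t := by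
  rw [mnat, msharp_inv_eq_of_mul_mul_eq hP hX h]

end Matrix

theorem mnat_interpolation_general {n : ℕ} (A B : Matrix (Fin n) (Fin n) ℂ)
    (hA : A.PosDef) (hB : B.PosDef) (r s t : ℝ) :
    mnat (mnat A B r) (mnat A B s) t = mnat A B ((1 - t) * r + t * s) := by
  set C := msharp A⁻¹ B (1 / 2)
  have hC : C.PosDef := hA.inv.msharp hB _
  have hG (u : ℝ) : mnat A B u = mpow C u * A * mpow C u := rfl
  have hGr : (mnat A B r).PosDef := hA.mul_mul_same_s6 (hC.mpow r)
  have hrs : mpow C (s - r) * mnat A B r * mpow C (s - r) = mnat A B s := by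
    rw [hG, hG, mpow_mul_mpow_mul_mul hC, sub_add_cancel]
  rw [mnat_eq_of_mul_mul_eq hGr (hC.mpow _) hrs, mpow_mpow hC, hG, hG,
    mpow_mul_mpow_mul_mul hC, show (s - r) * t + r = (1 - t) * r + t * s by ring]

theorem mnat_interpolation {n : ℕ} (A B : Matrix (Fin n) (Fin n) ℂ)
    (hA : A.PosDef) (hB : B.PosDef) (r s t : ℝ)
    (hr : r ∈ Set.Icc (0:ℝ) 1) (hs : s ∈ Set.Icc (0:ℝ) 1) (ht : t ∈ Set.Icc (0:ℝ) 1) :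
    mnat (mnat A B r) (mnat A B s) t = mnat A B ((1 - t) * r + t * s) :=
  mnat_interpolation_general A B hA hB r s t
end
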